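/- Let 1 ≤ d ≤ 2(q−1) and d^⊥ = 2(q²−1)−d. Let f = Σ λ_{a₁,a₂} x₁^{a₁}x₂^{a₂}, where the sum runs over all pairs (a₁,a₂) with a₁ > 0, a₁+a₂ = d, 0 ≤ a₂ ≤ q²−1, and λ_{a₁,a₂} ∈ F_{q²}. Set T_f = {a₂ : λ_{d−a₂,a₂} ≠ 0}. Then ev(f) ∈ (PRM_{d^⊥}(q²,2))^q if and only if d ≡ 0 (mod q−1) or T_f ⊆ T. -/

import Mathlib

open MvPolynomial

/-- The fixed representatives of the points of the projective plane over `F`: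
the leftmost nonzero coordinate equals 1. -/
def stdRep (F : Type*) [Field F] : Set (Fin 3 → F) :=
  {v | v 0 = 1 ∨ (v 0 = 0 ∧ v 1 = 1) ∨ (v 0 = 0 ∧ v 1 = 0 ∧ v 2 = 1)}

/-- The evaluation map at the fixed representatives. -/
noncomputable def ev (F : Type*) [Field F] :
    MvPolynomial (Fin 3) F →ₗ[F] (stdRep F → F) :=
  LinearMap.pi fun Q => (aeval (Q : Fin 3 → F)).toLinearMap

/-- The projective Reed–Muller code of degree `d` over the projective plane. -/
noncomputable def PRM (F : Type*) [Field F] (d : ℕ) : Submodule F (stdRep F → F) :=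
  (homogeneousSubmodule (Fin 3) F d).map (ev F)

/-- The componentwise `q`-th power of a set of vectors. -/
def powq {F : Type*} [Field F] (q : ℕ) (Cset : Set (stdRep F → F)) :
    Set (stdRep F → F) :=
  {v | ∃ w ∈ Cset, v = fun i => (w i) ^ q}

/-- `ob N z` is the representative `z̄` of `z` modulo `N−1`: it satisfies
`1 ≤ z̄ ≤ N−1` and `z̄ ≡ z (mod N−1)` if `z > 0`, and `z̄ = 0` if `z = 0`. -/
def ob (N z : ℕ) : ℕ := if z = 0 then 0 else (z - 1) % (N - 1) + 1

/-!
Since `x ↦ x ^ q` is an involution of `𝔽_{q²}`, `ev f ∈ (PRM_{d^⊥})^q` iff `ev (f ^ q) ∈ PRM_{d^⊥}`,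
and by Frobenius `f ^ q = ∑ λ^q x₁^{q(d-a₂)} x₂^{q a₂}`. On `𝔽_{q²}` an exponent matters only modulo
`q² - 1` and through whether it vanishes, so a monomial of `f ^ q` may be traded for a form of
degree `d^⊥`: a single monomial when `q d ≡ d^⊥`, i.e. `(q - 1) ∣ d`, and otherwise a monomial that
is right on the chart `x₀ = 1` plus a correction on the line `x₀ = 0`, which has room exactly when
`a₂ ∈ T`. Conversely, for `a₂ ∉ T` with `λ ≠ 0` a suitable weighted power sum
`v ↦ ∑ y^r z^s v(1,y,z) + ∑ z^s v(0,1,z)` vanishes on `PRM_{d^⊥}` but equals `-λ^q` on `ev (f ^ q)`.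
-/

lemma Nat.eq_of_dvd_of_pos_of_lt_two_mul {m n : ℕ} (h : m ∣ n) (hn : 0 < n) (hlt : n < 2 * m) :
    n = m := by
  obtain ⟨k, rfl⟩ := h
  rcases k with _ | _ | k
  · simp at hn
  · simp
  · nlinarith

lemma Nat.coprime_sq_sub_one_self {q : ℕ} (hq : q ≠ 0) : Nat.Coprime (q ^ 2 - 1) q :=
  ((Nat.coprime_self_sub_left (Nat.one_le_pow _ _ (Nat.pos_of_ne_zero hq))).mpr
    (Nat.coprime_one_left _)).coprime_dvd_right (dvd_pow_self q two_ne_zero)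

lemma ob_modEq (N z : ℕ) : ob N z ≡ z [MOD N - 1] := by
  unfold ob
  split_ifs with hz
  · rw [hz]
  · conv_rhs => rw [← Nat.sub_add_cancel (Nat.one_le_iff_ne_zero.mpr hz)]
    exact (Nat.mod_modEq _ _).add_right 1

lemma ob_pos {N z : ℕ} (hz : z ≠ 0) : 0 < ob N z := by
  simp [ob, hz]

lemma ob_le {N : ℕ} (hN : 2 ≤ N) (z : ℕ) : ob N z ≤ N - 1 := by
  unfold ob
  split_ifs
  · omega
  · have := Nat.mod_lt (z - 1) (show 0 < N - 1 by omega)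
    omega

lemma lt_sq_sub_one_of_le_two_mul_sub_one {q d : ℕ} (hq : 2 ≤ q) (hd : d ≤ 2 * (q - 1)) :
    d < q ^ 2 - 1 := by
  have : 2 * q ≤ q ^ 2 := by nlinarith
  omega

lemma mul_modEq_two_mul_sub_of_dvd {q d : ℕ} (hdq : q - 1 ∣ d) (hd : d ≤ 2 * (q ^ 2 - 1)) :
    q * d ≡ 2 * (q ^ 2 - 1) - d [MOD q ^ 2 - 1] := by
  refine Nat.ModEq.add_right_cancel' d ?_
  rw [Nat.sub_add_cancel hd, show q * d + d = (q + 1) * d by ring]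
  refine (Nat.modEq_zero_iff_dvd.mpr ?_).trans (Nat.modEq_zero_iff_dvd.mpr (dvd_mul_left _ 2)).symm
  rw [show q ^ 2 - 1 = (q + 1) * (q - 1) by simpa using Nat.sq_sub_sq q 1]
  exact Nat.mul_dvd_mul_left _ hdq

lemma exists_dvd_mul_add_of_le_ob {q d a : ℕ} (hq : 2 ≤ q) (hd : d ≤ 2 * (q - 1)) (had : a < d)
    (hT : 2 * (q ^ 2 - 1) - d ≤ ob (q ^ 2) (q * a) + (q ^ 2 - 1)) :
    ∃ s, s ≠ 0 ∧ s < d ∧ q ^ 2 - 1 ∣ q * a + s := by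
  -- `s = M - ob (q * a)`; it is too large only if `M ∣ q * a + d`, and then multiplying by `q`
  -- gives `M ∣ a + q * d` too, so both sums equal `M`, forcing `a = d`.
  have hdM := lt_sq_sub_one_of_le_two_mul_sub_one hq hd
  have hq4 : 4 ≤ q ^ 2 := by nlinarith
  set M := q ^ 2 - 1 with hM
  have hM1 : M + 1 = q ^ 2 := by omega
  have hβ : ob (q ^ 2) (q * a) ≡ q * a [MOD M] := ob_modEq _ _
  have hβle : ob (q ^ 2) (q * a) ≤ M := ob_le (by omega) _
  set β := ob (q ^ 2) (q * a)
  have ha : a ≠ 0 := by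
    rintro rfl
    simp only [β, ob, mul_zero, ↓reduceIte, zero_add] at hT
    omega
  have hβM : β ≠ M := by
    intro h
    have : M ∣ a := (Nat.coprime_sq_sub_one_self (by omega)).dvd_of_dvd_mul_left
      ((hβ.dvd_iff dvd_rfl).mp (by rw [h]))
    have := Nat.le_of_dvd (by omega) this
    omega
  have hβd : β + d ≠ M := by
    intro h
    have h1 : M ∣ q * a + d := ((hβ.add_right d).dvd_iff dvd_rfl).mp (by rw [h])
    have h2 : M ∣ a + q * d := by
      refine (Nat.dvd_add_right (dvd_mul_right M a)).mp ?_
      rw [show M * a + (a + q * d) = q * (q * a + d) by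
        rw [mul_add, ← mul_assoc, ← sq, ← hM1]; ring]
      exact dvd_mul_of_dvd_right h1 q
    have hqd : (q + 1) * d ≤ 2 * M := by
      nlinarith [Nat.mul_le_mul_left (q + 1) (show d + 2 ≤ 2 * q by omega)]
    have e1 := Nat.eq_of_dvd_of_pos_of_lt_two_mul h1 (by omega)
      (by nlinarith [Nat.mul_le_mul_left q had])
    have e2 := Nat.eq_of_dvd_of_pos_of_lt_two_mul h2 (by omega) (by nlinarith)
    nlinarith
  refine ⟨M - β, by omega, by omega, ((hβ.add_right (M - β)).dvd_iff dvd_rfl).mp ?_⟩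
  rw [Nat.add_sub_cancel' hβle]

section FiniteField

variable {F : Type*} [Field F] [Fintype F]

lemma pow_eq_pow_of_modEq_card_sub_one (t : F) {m m' : ℕ} (hm : m ≠ 0) (hm' : m' ≠ 0)
    (h : m ≡ m' [MOD Fintype.card F - 1]) : t ^ m = t ^ m' := by
  rcases eq_or_ne t 0 with rfl | ht
  · rw [zero_pow hm, zero_pow hm']
  · exact pow_eq_pow_of_modEq h (FiniteField.pow_card_sub_one_eq_one t ht)

lemma pow_ob (t : F) (z : ℕ) : t ^ ob (Fintype.card F) z = t ^ z := by
  rcases eq_or_ne z 0 with rfl | hz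
  · rfl
  · exact pow_eq_pow_of_modEq_card_sub_one t (ob_pos hz).ne' hz (ob_modEq _ _)

lemma sum_pow_eq_ite {k : ℕ} (hk : k ≠ 0) :
    ∑ t : F, t ^ k = if Fintype.card F - 1 ∣ k then -1 else 0 := by
  classical
  rw [← FiniteField.sum_pow_units, ← Finset.sum_erase_add _ _ (Finset.mem_univ 0),
    zero_pow hk, add_zero]
  symm
  refine Finset.sum_bij (fun u _ => (u : F)) (fun u _ => by simp) (fun _ _ _ _ => Units.ext)
    (fun t ht => ⟨Units.mk0 t (Finset.ne_of_mem_erase ht), by simp, rfl⟩) (fun _ _ => rfl)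

lemma exists_charP_pow_eq {q : ℕ} (hq : Fintype.card F = q ^ 2) :
    ∃ p k : ℕ, p.Prime ∧ CharP F p ∧ q = p ^ k := by
  obtain ⟨n, hp, hcard⟩ := FiniteField.card F (ringChar F)
  obtain ⟨k, -, hk⟩ := (Nat.dvd_prime_pow hp).mp
    (show q ∣ ringChar F ^ (n : ℕ) from hcard ▸ hq ▸ dvd_pow_self q two_ne_zero)
  exact ⟨ringChar F, k, hp, ringChar.charP F, hk⟩

lemma two_le_of_card_eq_sq {q : ℕ} (hq : Fintype.card F = q ^ 2) : 2 ≤ q := by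
  have := hq ▸ Fintype.one_lt_card (α := F)
  nlinarith

end FiniteField

section Evaluation

variable {F : Type*} [Field F]

lemma ev_apply (f : MvPolynomial (Fin 3) F) (Q : stdRep F) :
    ev F f Q = eval (Q : Fin 3 → F) f := by
  simp [ev, aeval_def, eval₂_id]

lemma ev_pow (f : MvPolynomial (Fin 3) F) (n : ℕ) : ev F (f ^ n) = fun Q => ev F f Q ^ n := by
  ext Q
  simp [ev_apply]

lemma isHomogeneous_X_pow_mul_X_pow_mul_X_pow {a b c D : ℕ} (h : a + b + c = D) :
    (X 0 ^ a * X 1 ^ b * X 2 ^ c : MvPolynomial (Fin 3) F).IsHomogeneous D :=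
  h ▸ ((isHomogeneous_X_pow 0 a).mul (isHomogeneous_X_pow 1 b)).mul (isHomogeneous_X_pow 2 c)

lemma ev_eq_sum_coeff_smul (g : MvPolynomial (Fin 3) F) :
    ev F g = ∑ m ∈ g.support, coeff m g • ev F (X 0 ^ m 0 * X 1 ^ m 1 * X 2 ^ m 2) := by
  ext Q
  rw [ev_apply, eval_eq']
  simp only [Finset.sum_apply, Pi.smul_apply, smul_eq_mul, ev_apply, Fin.prod_univ_three, eval_mul,
    eval_pow, eval_X]

lemma ev_mem_PRM_of_eval_eq {D : ℕ} {g p : MvPolynomial (Fin 3) F} (hg : g.IsHomogeneous D)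
    (h : ∀ Q ∈ stdRep F, eval Q g = eval Q p) : ev F p ∈ PRM F D := by
  refine ⟨g, (mem_homogeneousSubmodule _ _).mpr hg, funext fun Q => ?_⟩
  rw [ev_apply, ev_apply, h Q Q.2]

lemma ev_sum_mem_PRM {D : ℕ} (S : Finset ℕ) (μ : ℕ → F) (e e' : ℕ → ℕ)
    (h : ∀ a ∈ S, μ a ≠ 0 → ev F (X 1 ^ e a * X 2 ^ e' a) ∈ PRM F D) :
    ev F (∑ a ∈ S, C (μ a) * X 1 ^ e a * X 2 ^ e' a) ∈ PRM F D := by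
  rw [map_sum]
  refine Submodule.sum_mem _ fun a ha => ?_
  rcases eq_or_ne (μ a) 0 with hμ | hμ
  · simp [hμ]
  · rw [mul_assoc, C_mul', map_smul]
    exact Submodule.smul_mem _ _ (h a ha hμ)

variable [Fintype F]

lemma mem_powq_iff {q : ℕ} (hq : Fintype.card F = q ^ 2) (C : Set (stdRep F → F))
    (v : stdRep F → F) : v ∈ powq q C ↔ (fun Q => v Q ^ q) ∈ C := by
  have hinv : ∀ x : F, (x ^ q) ^ q = x := fun x => by
    rw [← pow_mul, ← sq, ← hq, FiniteField.pow_card]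
  constructor
  · rintro ⟨w, hw, rfl⟩
    simpa only [hinv] using hw
  · exact fun h => ⟨_, h, funext fun Q => (hinv (v Q)).symm⟩

lemma pow_sum_C_mul_X_pow_mul_X_pow {q : ℕ} (hq : Fintype.card F = q ^ 2) (S : Finset ℕ)
    (μ : ℕ → F) (e e' : ℕ → ℕ) :
    (∑ a ∈ S, C (μ a) * X 1 ^ e a * X 2 ^ e' a : MvPolynomial (Fin 3) F) ^ q =
      ∑ a ∈ S, C (μ a ^ q) * X 1 ^ (q * e a) * X 2 ^ (q * e' a) := by
  obtain ⟨p, k, hp, hchar, rfl⟩ := exists_charP_pow_eq hq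
  have := Fact.mk hp
  rw [sum_pow_char_pow]
  simp only [mul_pow, ← map_pow, ← pow_mul, mul_comm (p ^ k)]

lemma ev_X_pow_mul_X_pow_mem_PRM_of_modEq {a b D : ℕ} (ha : a ≠ 0)
    (hD : Fintype.card F - 1 < D) (h : a + b ≡ D [MOD Fintype.card F - 1]) :
    ev F (X 1 ^ a * X 2 ^ b) ∈ PRM F D := by
  have hβ := ob_le (Fintype.one_lt_card (α := F)) b
  have hmod : D - ob (Fintype.card F) b ≡ a [MOD Fintype.card F - 1] := by
    refine Nat.ModEq.add_right_cancel' (ob (Fintype.card F) b) ?_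
    rw [Nat.sub_add_cancel (by omega)]
    exact h.symm.trans ((ob_modEq _ b).symm.add_left a)
  refine ev_mem_PRM_of_eval_eq
    (g := X 0 ^ 0 * X 1 ^ (D - ob (Fintype.card F) b) * X 2 ^ ob (Fintype.card F) b)
    (isHomogeneous_X_pow_mul_X_pow_mul_X_pow (by omega)) fun Q _ => ?_
  simp only [eval_mul, eval_pow, eval_X, pow_zero, one_mul]
  rw [pow_eq_pow_of_modEq_card_sub_one _ (by omega) ha hmod, pow_ob]

lemma ev_X_pow_mul_X_pow_mem_PRM_of_ob_add_lt {a b D : ℕ} (ha : a ≠ 0)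
    (hD : ob (Fintype.card F) b + (Fintype.card F - 1) < D) :
    ev F (X 1 ^ a * X 2 ^ b) ∈ PRM F D := by
  have hN : 2 ≤ Fintype.card F := Fintype.one_lt_card
  have hα := ob_le hN a
  set M := Fintype.card F - 1
  set α := ob (Fintype.card F) a
  set β := ob (Fintype.card F) b
  refine ev_mem_PRM_of_eval_eq (g := X 0 ^ (D - α - β) * X 1 ^ α * X 2 ^ β
      + X 0 ^ 0 * X 1 ^ (D - β) * X 2 ^ β - X 0 ^ M * X 1 ^ (D - β - M) * X 2 ^ β)
    (((isHomogeneous_X_pow_mul_X_pow_mul_X_pow (by omega)).add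
      (isHomogeneous_X_pow_mul_X_pow_mul_X_pow (by omega))).sub
      (isHomogeneous_X_pow_mul_X_pow_mul_X_pow (by omega))) fun Q hQ => ?_
  -- The first monomial is right on the chart `x₀ = 1` and vanishes on the line `x₀ = 0`; the
  -- other two cancel on the chart (`t ^ (e + M) = t ^ e` for `e ≠ 0`) and give `z ^ b` at
  -- `(0, 1, z)`.
  have hz : Q 2 ^ β = Q 2 ^ b := pow_ob _ _
  simp only [eval_add, eval_sub, eval_mul, eval_pow, eval_X, pow_zero, one_mul, hz]
  obtain h0 | ⟨h0, h1⟩ | ⟨h0, h1, -⟩ := hQ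
  · have hy : Q 1 ^ (D - β) = Q 1 ^ (D - β - M) :=
      pow_eq_pow_of_modEq_card_sub_one _ (by omega) (by omega)
        ((Nat.modEq_iff_dvd' (by omega)).mpr ⟨1, by omega⟩).symm
    rw [h0, hy, pow_ob]
    ring
  · rw [h0, h1]
    simp [zero_pow (show D - α - β ≠ 0 by omega), zero_pow (show M ≠ 0 by omega)]
  · rw [h0, h1]
    simp [zero_pow (show D - α - β ≠ 0 by omega), zero_pow (show M ≠ 0 by omega),
      zero_pow (show D - β ≠ 0 by omega), zero_pow ha]

def chartFunctional (r s : ℕ) : (stdRep F → F) →ₗ[F] F :=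
  ∑ y : F, ∑ z : F, (y ^ r * z ^ s) • LinearMap.proj (⟨![1, y, z], Or.inl rfl⟩ : stdRep F) +
    ∑ z : F, z ^ s • LinearMap.proj (⟨![0, 1, z], Or.inr (Or.inl ⟨rfl, rfl⟩)⟩ : stdRep F)

lemma chartFunctional_ev_X_pow (r s a b c : ℕ) :
    chartFunctional r s (ev F (X 0 ^ a * X 1 ^ b * X 2 ^ c)) =
      (∑ y : F, y ^ (b + r)) * ∑ z : F, z ^ (c + s) + 0 ^ a * ∑ z : F, z ^ (c + s) := by
  simp only [chartFunctional, LinearMap.add_apply, LinearMap.sum_apply,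
    LinearMap.smul_apply, LinearMap.proj_apply, ev_apply, smul_eq_mul, eval_mul, eval_pow, eval_X]
  rw [Finset.sum_mul_sum, Finset.mul_sum]
  congr 1 <;> refine Finset.sum_congr rfl fun y _ => ?_
  · refine Finset.sum_congr rfl fun z _ => ?_
    simp only [Matrix.cons_val_zero, Matrix.cons_val_one, Matrix.cons_val, one_pow, pow_add]
    ring
  · simp only [Matrix.cons_val_zero, Matrix.cons_val_one, Matrix.cons_val, one_pow, pow_add]
    ring

lemma chartFunctional_eq_zero_of_mem_PRM {r s D : ℕ} (hr : r ≠ 0) (hs : s ≠ 0)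
    (hDs : D + s < 2 * (Fintype.card F - 1)) (hrs : Fintype.card F - 1 ∣ D + r + s)
    {v : stdRep F → F} (hv : v ∈ PRM F D) : chartFunctional r s v = 0 := by
  obtain ⟨g, hg, rfl⟩ := hv
  rw [SetLike.mem_coe, mem_homogeneousSubmodule] at hg
  rw [ev_eq_sum_coeff_smul, map_sum]
  refine Finset.sum_eq_zero fun m hm => ?_
  have hdeg : m 0 + m 1 + m 2 = D := by
    by_contra h
    exact mem_support_iff.mp hm (hg.coeff_eq_zero (by
      rwa [Finsupp.degree_eq_sum, Fin.sum_univ_three]))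
  rw [map_smul, chartFunctional_ev_X_pow, sum_pow_eq_ite (by omega), sum_pow_eq_ite (by omega)]
  set M := Fintype.card F - 1
  -- Only monomials with `m 2 + s = M` contribute; for them the two sums cancel when `x₀` is
  -- absent and both vanish otherwise.
  by_cases h2 : M ∣ m 2 + s
  · have hm2 : m 2 + s = M := Nat.eq_of_dvd_of_pos_of_lt_two_mul h2 (by omega) (by omega)
    rcases eq_or_ne (m 0) 0 with hm0 | hm0
    · have h1 : M ∣ m 1 + r :=
        (Nat.dvd_add_left h2).mp (by rwa [show m 1 + r + (m 2 + s) = D + r + s by omega])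
      simp [h1, h2, hm0]
    · have h1 : ¬ M ∣ m 1 + r := by
        intro h1
        have : M ∣ m 0 := (Nat.dvd_add_left (Nat.dvd_add h1 h2)).mp
          (by rwa [show m 0 + (m 1 + r + (m 2 + s)) = D + r + s by omega])
        have := Nat.le_of_dvd (by omega) this
        omega
      simp [h1, h2, hm0]
  · simp [h2]

lemma chartFunctional_ev_sum {q d a' s : ℕ} (hq : Fintype.card F = q ^ 2) (hdM : d < q ^ 2 - 1)
    (hd : ¬ q - 1 ∣ d) (hs : s ≠ 0) (hdvd : q ^ 2 - 1 ∣ q * a' + s) (S : Finset ℕ)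
    (hS : ∀ a ∈ S, a < d) (ha' : a' ∈ S) (μ : ℕ → F) :
    chartFunctional (q * a' + d) s
      (ev F (∑ a ∈ S, C (μ a) * X 1 ^ (q * (d - a)) * X 2 ^ (q * a))) = -μ a' := by
  have hq0 : q ≠ 0 := by rintro rfl; simp at hdM
  have hterm : ∀ a ∈ S, chartFunctional (q * a' + d) s
      (ev F (C (μ a) * X 1 ^ (q * (d - a)) * X 2 ^ (q * a))) =
        μ a * ((if q ^ 2 - 1 ∣ q * (d - a) + (q * a' + d) then -1 else 0) *
          (if q ^ 2 - 1 ∣ q * a + s then -1 else 0) +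
          if q ^ 2 - 1 ∣ q * a + s then -1 else 0) := fun a ha => by
    have hda := hS a ha
    rw [show (C (μ a) * X 1 ^ (q * (d - a)) * X 2 ^ (q * a) : MvPolynomial (Fin 3) F) =
        μ a • (X 0 ^ 0 * X 1 ^ (q * (d - a)) * X 2 ^ (q * a)) by
          rw [pow_zero, one_mul, C_mul', smul_mul_assoc],
      map_smul, map_smul, chartFunctional_ev_X_pow, sum_pow_eq_ite (by omega),
      sum_pow_eq_ite (by omega), hq, pow_zero, one_mul, smul_eq_mul]
  rw [map_sum, map_sum, Finset.sum_eq_single_of_mem a' ha' fun a ha hne => ?_, hterm a' ha']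
  · have hfac : q * (d - a') + (q * a' + d) = (q + 1) * d := by
      rw [← add_assoc, ← mul_add, Nat.sub_add_cancel (hS a' ha').le]; ring
    have hnot : ¬ q ^ 2 - 1 ∣ q * (d - a') + (q * a' + d) := by
      rw [hfac, show q ^ 2 - 1 = (q + 1) * (q - 1) by simpa using Nat.sq_sub_sq q 1,
        Nat.mul_dvd_mul_iff_left (Nat.succ_pos q)]
      exact hd
    simp [hnot, hdvd]
  · have hnot : ¬ q ^ 2 - 1 ∣ q * a + s := by
      intro h
      have hmod : q * a ≡ q * a' [MOD q ^ 2 - 1] := Nat.ModEq.add_right_cancel' s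
        ((Nat.modEq_zero_iff_dvd.mpr h).trans (Nat.modEq_zero_iff_dvd.mpr hdvd).symm)
      exact hne ((hmod.cancel_left_of_coprime (Nat.coprime_sq_sub_one_self hq0)).eq_of_lt_of_lt
        ((hS a ha).trans hdM) ((hS a' ha').trans hdM))
    rw [hterm a ha]
    simp [hnot]

lemma ev_sum_not_mem_PRM {q d a' : ℕ} (hq : Fintype.card F = q ^ 2) (hd2 : d ≤ 2 * (q - 1))
    (hd : ¬ q - 1 ∣ d) (S : Finset ℕ) (hS : ∀ a ∈ S, a < d) (ha' : a' ∈ S) (μ : ℕ → F)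
    (hμ : μ a' ≠ 0) (hT : 2 * (q ^ 2 - 1) - d ≤ ob (q ^ 2) (q * a') + (q ^ 2 - 1)) :
    ev F (∑ a ∈ S, C (μ a) * X 1 ^ (q * (d - a)) * X 2 ^ (q * a)) ∉
      PRM F (2 * (q ^ 2 - 1) - d) := by
  have hq2 := two_le_of_card_eq_sq hq
  have hdM := lt_sq_sub_one_of_le_two_mul_sub_one hq2 hd2
  have ha'd := hS a' ha'
  obtain ⟨s, hs, hsd, hdvd⟩ := exists_dvd_mul_add_of_le_ob hq2 hd2 ha'd hT
  intro hmem
  have h0 := chartFunctional_eq_zero_of_mem_PRM (r := q * a' + d) (by omega) hs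
    (by rw [hq]; omega) (by
      rw [hq, show 2 * (q ^ 2 - 1) - d + (q * a' + d) + s = 2 * (q ^ 2 - 1) + (q * a' + s) by omega]
      exact dvd_add (dvd_mul_left _ _) hdvd) hmem
  rw [chartFunctional_ev_sum hq hdM hd hs hdvd S hS ha'] at h0
  exact hμ (neg_eq_zero.mp h0)

end Evaluation

theorem stmt12_general {F : Type*} [Field F] [Fintype F] (q d : ℕ)
    (hq : Fintype.card F = q ^ 2) (h2 : d ≤ 2 * (q - 1))
    (lam : ℕ → F) (f : MvPolynomial (Fin 3) F)
    (hf : f = ∑ a₂ ∈ (Finset.range (q ^ 2)).filter (fun a₂ => a₂ < d),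
        C (lam a₂) * X 1 ^ (d - a₂) * X 2 ^ a₂) :
    ev F f ∈ powq q (PRM F (2 * (q ^ 2 - 1) - d) : Set (stdRep F → F)) ↔
      (d ≡ 0 [MOD q - 1] ∨
        {a₂ : ℕ | a₂ ≤ q ^ 2 - 1 ∧ a₂ < d ∧ lam a₂ ≠ 0} ⊆
          {a₂ : ℕ | a₂ ≤ q ^ 2 - 1 ∧ a₂ < d ∧
            ob (q ^ 2) (q * a₂) + (q ^ 2 - 1) < 2 * (q ^ 2 - 1) - d}) := by
  have hq2 := two_le_of_card_eq_sq hq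
  have hdM := lt_sq_sub_one_of_le_two_mul_sub_one hq2 h2
  have hS : ∀ a ∈ (Finset.range (q ^ 2)).filter (· < d), a < d := fun a ha =>
    (Finset.mem_filter.mp ha).2
  have hSM : ∀ a ∈ (Finset.range (q ^ 2)).filter (· < d), a ≤ q ^ 2 - 1 := fun a ha => by
    have := Finset.mem_range.mp (Finset.mem_filter.mp ha).1
    omega
  rw [mem_powq_iff hq, ← ev_pow, hf, pow_sum_C_mul_X_pow_mul_X_pow hq, SetLike.mem_coe]
  constructor
  · intro hmem
    by_contra! h
    obtain ⟨hd, hsub⟩ := h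
    obtain ⟨a, ⟨haM, had, hla⟩, haT⟩ := Set.not_subset.mp hsub
    exact ev_sum_not_mem_PRM hq h2 (mt Nat.modEq_zero_iff_dvd.mpr hd) _ hS
      (Finset.mem_filter.mpr ⟨Finset.mem_range.mpr (by omega), had⟩) _ (pow_ne_zero q hla)
      (by simp only [Set.mem_ofPred_eq, not_and, not_lt] at haT; exact haT haM had) hmem
  · refine fun h => ev_sum_mem_PRM _ _ _ _ fun a ha hla => ?_
    have had := hS a ha
    rcases h with hd | hT
    · refine ev_X_pow_mul_X_pow_mem_PRM_of_modEq (Nat.mul_ne_zero (by omega) (by omega))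
        (by rw [hq]; omega) ?_
      rw [← mul_add, Nat.sub_add_cancel had.le, hq]
      exact mul_modEq_two_mul_sub_of_dvd (Nat.modEq_zero_iff_dvd.mp hd) (by omega)
    · refine ev_X_pow_mul_X_pow_mem_PRM_of_ob_add_lt (Nat.mul_ne_zero (by omega) (by omega)) ?_
      rw [hq]
      exact (hT ⟨hSM a ha, had, fun h0 => hla (by rw [h0, zero_pow (by omega)])⟩).2.2

/-- for `f` supported on `A₂^d` with coefficients `λ_{d−a₂,a₂} = lam a₂`,
`ev(f) ∈ (PRM_{d^⊥}(q²,2))^q` iff `d ≡ 0 (mod q−1)` or `T_f ⊆ T`. -/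
theorem stmt12 {F : Type*} [Field F] [Fintype F] (q d : ℕ)
    (hq : Fintype.card F = q ^ 2) (h1 : 1 ≤ d) (h2 : d ≤ 2 * (q - 1))
    (lam : ℕ → F) (f : MvPolynomial (Fin 3) F)
    (hf : f = ∑ a₂ ∈ (Finset.range (q ^ 2)).filter (fun a₂ => a₂ < d),
        C (lam a₂) * X 1 ^ (d - a₂) * X 2 ^ a₂) :
    ev F f ∈ powq q (PRM F (2 * (q ^ 2 - 1) - d) : Set (stdRep F → F)) ↔
      (d ≡ 0 [MOD q - 1] ∨
        {a₂ : ℕ | a₂ ≤ q ^ 2 - 1 ∧ a₂ < d ∧ lam a₂ ≠ 0} ⊆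
          {a₂ : ℕ | a₂ ≤ q ^ 2 - 1 ∧ a₂ < d ∧
            ob (q ^ 2) (q * a₂) + (q ^ 2 - 1) < 2 * (q ^ 2 - 1) - d}) :=
  stmt12_general q d hq h2 lam f hf
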